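/- Let s be irrational with continued fraction convergents p_n/q_n, and set r_n = log q_{n+1} / log q_n. Then the approximation exponent satisfies μ(s) = 1 + limsup_{n→∞} r_n. -/

import Mathlib

open Filter Real ENNReal

noncomputable section

/-- The approximation exponent `μ(s)`, valued in `[0,∞]`. -/
def approxExp (s : ℝ) : ℝ≥0∞ :=
  ⨆ (ν : ℝ) (_ : {pq : ℤ × ℕ+ |
    |s - (pq.1 : ℝ) / ((pq.2 : ℕ) : ℝ)| < ((pq.2 : ℕ) : ℝ) ^ (-ν)}.Infinite),
    ENNReal.ofReal ν

/-!
The convergents `pₙ / qₙ` of `s` satisfy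
`1 / (qₙ (qₙ + qₙ₊₁)) < |s - pₙ / qₙ| ≤ 1 / (qₙ qₙ₊₁)`,
so up to a factor `2`, which is invisible on the logarithmic scale once `qₙ → ∞`, the convergent
`pₙ / qₙ` is a solution of exponent `ν` exactly when `qₙ ^ ν < qₙ qₙ₊₁`, i.e. when `ν < 1 + rₙ`.
This gives `1 + limsup rₙ ≤ μ(s)`. Conversely, for `ν > 2` a solution `p / q` with `q` large
satisfies `|s - p / q| < 1 / (2 q²)`, so by Legendre's theorem it is a convergent `pₙ / qₙ` with
`qₙ ≤ q`; the lower error bound then gives `qₙ ^ ν < 2 qₙ qₙ₊₁`, and infinitely many solutions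
yield infinitely many such `n`.
-/

namespace ENNReal

variable {α : Type*} {f : Filter α} {u : α → ℝ} {ν : ℝ}

theorem frequently_sub_one_lt_of_ofReal_lt_one_add_limsup [f.NeBot] (hu : ∀ a, 0 ≤ u a)
    (h : ENNReal.ofReal ν < 1 + limsup (fun a ↦ ENNReal.ofReal (u a)) f) :
    ∃ᶠ a in f, ν - 1 < u a := by
  rcases lt_or_ge ν 1 with hν | hν
  · exact Frequently.of_forall fun a ↦ by linarith [hu a]
  · have hlt : ENNReal.ofReal (ν - 1) < limsup (fun a ↦ ENNReal.ofReal (u a)) f := by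
      rw [ENNReal.ofReal_sub _ zero_le_one, ENNReal.ofReal_one]
      exact ENNReal.sub_lt_of_lt_add (ENNReal.one_le_ofReal.mpr hν) (by rwa [add_comm])
    exact (frequently_lt_of_lt_limsup (by isBoundedDefault) hlt).mono fun a ha ↦
      (ENNReal.ofReal_lt_ofReal_iff'.mp ha).1

theorem ofReal_le_one_add_limsup_of_frequently (h : ∀ δ > 0, ∃ᶠ a in f, ν - 1 - δ < u a) :
    ENNReal.ofReal ν ≤ 1 + limsup (fun a ↦ ENNReal.ofReal (u a)) f := by
  refine ENNReal.le_of_forall_pos_le_add fun ε hε _ ↦ ?_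
  have hL : ENNReal.ofReal (ν - 1 - ε) ≤ limsup (fun a ↦ ENNReal.ofReal (u a)) f :=
    le_limsup_of_frequently_le ((h ε hε).mono fun a ha ↦ ENNReal.ofReal_le_ofReal ha.le)
      (by isBoundedDefault)
  calc ENNReal.ofReal ν = ENNReal.ofReal ((ν - 1 - ε) + (1 + ε)) := by ring_nf
    _ ≤ ENNReal.ofReal (ν - 1 - ε) + ENNReal.ofReal (1 + ε) := ENNReal.ofReal_add_le
    _ = ENNReal.ofReal (ν - 1 - ε) + (1 + ε) := by
      rw [ENNReal.ofReal_add zero_le_one ε.coe_nonneg, ENNReal.ofReal_one,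
        ENNReal.ofReal_coe_nnreal]
    _ ≤ limsup (fun a ↦ ENNReal.ofReal (u a)) f + (1 + ε) := by gcongr
    _ = 1 + limsup (fun a ↦ ENNReal.ofReal (u a)) f + ε := by ring

end ENNReal

theorem Real.rpow_lt_mul_iff_sub_one_lt_log_div_log {a b ν : ℝ} (ha : 1 < a) (hb : 0 < b) :
    a ^ ν < a * b ↔ ν - 1 < log b / log a := by
  have ha₀ : 0 < a := by linarith
  rw [lt_div_iff₀ (log_pos ha), ← log_lt_log_iff (rpow_pos_of_pos ha₀ ν) (by positivity),
    log_rpow ha₀, log_mul ha₀.ne' hb.ne', sub_mul, one_mul, sub_lt_iff_lt_add']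

theorem Real.rpow_neg_le_one_div_two_mul_sq {q ν : ℝ} (hν : 2 < ν) (hq : 2 ^ (ν - 2)⁻¹ ≤ q) :
    q ^ (-ν) ≤ 1 / (2 * q ^ 2) := by
  have hq₀ : 0 < q := lt_of_lt_of_le (by positivity) hq
  have h2 : 2 ≤ q ^ (ν - 2) := by
    calc (2 : ℝ) = (2 ^ (ν - 2)⁻¹) ^ (ν - 2) := (rpow_inv_rpow zero_le_two (by linarith)).symm
      _ ≤ q ^ (ν - 2) := by gcongr
  have hsplit : q ^ ν = q ^ (ν - 2) * q ^ 2 := by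
    rw [← rpow_natCast, ← rpow_add hq₀]; norm_num
  rw [rpow_neg hq₀.le, hsplit, ← one_div]
  gcongr

namespace GenContFract

variable {K : Type*} [Field K] [LinearOrder K] [FloorRing K]

theorem exists_int_pair_eq_contsAux (v : K) (n : ℕ) :
    ∃ conts : Pair ℤ, (GenContFract.of v).contsAux n = conts.map (↑) := by
  induction n using Nat.twoStepInduction with
  | zero => exact ⟨⟨1, 0⟩, by simp [contsAux, Pair.map]⟩
  | one => exact ⟨⟨⌊v⌋, 1⟩, by simp [contsAux, Pair.map]⟩
  | more n ih₀ ih₁ =>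
    obtain ⟨ppred, hppred⟩ := ih₀
    obtain ⟨pred, hpred⟩ := ih₁
    rcases hs : (GenContFract.of v).s.get? n with _ | gp
    · exact ⟨pred, by rw [contsAux_stable_of_terminated (by omega : n < n + 2) hs, hpred]⟩
    · obtain ⟨ha, b, hb⟩ := of_partNum_eq_one_and_exists_int_partDen_eq hs
      refine ⟨⟨b * pred.a + ppred.a, b * pred.b + ppred.b⟩, ?_⟩
      rw [contsAux_recurrence hs hppred hpred, ha, hb]
      simp [Pair.map]

theorem exists_int_eq_num_and_den (v : K) (n : ℕ) :
    ∃ A B : ℤ, (GenContFract.of v).nums n = A ∧ (GenContFract.of v).dens n = B := by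
  obtain ⟨⟨A, B⟩, h⟩ := exists_int_pair_eq_contsAux v (n + 1)
  refine ⟨A, B, ?_, ?_⟩ <;>
    simp [num_eq_conts_a, den_eq_conts_b, nth_cont_eq_succ_nth_contAux, h, Pair.map]

theorem lt_abs_sub_convs [IsStrictOrderedRing K] {v : K} {n : ℕ}
    (h : ¬(GenContFract.of v).TerminatedAt n) :
    1 / ((GenContFract.of v).dens n *
        ((GenContFract.of v).dens n + (GenContFract.of v).dens (n + 1))) <
      |v - (GenContFract.of v).convs n| := by
  obtain ⟨ifp', hifp'⟩ := Option.ne_none_iff_exists'.mp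
    (of_terminatedAt_n_iff_succ_nth_intFractPair_stream_eq_none.not.mp h)
  obtain ⟨ifp, hifp, hfr, rfl⟩ := IntFractPair.succ_nth_stream_eq_some_iff.mp hifp'
  have hsub := sub_convs_eq hifp
  simp only [if_neg hfr] at hsub
  set B := ((GenContFract.of v).contsAux (n + 1)).b
  set pB := ((GenContFract.of v).contsAux n).b
  have hB : (GenContFract.of v).dens n = B := by rw [den_eq_conts_b, nth_cont_eq_succ_nth_contAux]
  have hB' : (GenContFract.of v).dens (n + 1) = ⌊ifp.fr⁻¹⌋ * B + pB := by
    rw [den_eq_conts_b, nth_cont_eq_succ_nth_contAux,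
      contsAux_recurrence (get?_of_eq_some_of_succ_get?_intFractPair_stream hifp') rfl rfl]
    simp [IntFractPair.of, B, pB]
  have hB0 : 0 < B := hB ▸ lt_of_lt_of_le (by exact_mod_cast Nat.fib_pos.mpr n.succ_pos)
    (succ_nth_fib_le_of_nth_den (Or.inr (mt (terminated_stable (n.sub_le 1)) h)))
  have hpB : 0 ≤ pB := zero_le_of_contsAux_b
  have hfr_pos : 0 < ifp.fr := (IntFractPair.nth_stream_fr_nonneg hifp).lt_of_ne' hfr
  have hfloor : ifp.fr⁻¹ < ⌊ifp.fr⁻¹⌋ + 1 := Int.lt_floor_add_one _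
  rw [hsub, abs_div, abs_pow, abs_neg, abs_one, one_pow, hB', hB,
    abs_of_pos (by positivity)]
  refine one_div_lt_one_div_of_lt (by positivity) (mul_lt_mul_of_pos_left ?_ hB0)
  linarith [mul_lt_mul_of_pos_right hfloor hB0]

theorem not_terminatedAt_of_irrational {v : ℝ} (hv : Irrational v) (n : ℕ) :
    ¬(GenContFract.of v).TerminatedAt n := fun h ↦ by
  obtain ⟨q, hq⟩ := (terminates_iff_rat v).mp ⟨n, h⟩
  exact hv.ne_rat q hq

theorem natCast_le_of_den_of_irrational {v : ℝ} (hv : Irrational v) (n : ℕ) :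
    (n : ℝ) ≤ (GenContFract.of v).dens n := by
  refine le_trans ?_ (succ_nth_fib_le_of_nth_den (Or.inr (not_terminatedAt_of_irrational hv _)))
  exact_mod_cast Nat.le_of_add_le_add_right (Nat.le_fib_add_one (n + 1))

theorem one_le_of_den_of_irrational {v : ℝ} (hv : Irrational v) (n : ℕ) :
    1 ≤ (GenContFract.of v).dens n := by
  rcases n with _ | n
  · rw [zeroth_den_eq_one]
  · exact le_trans (by simp) (natCast_le_of_den_of_irrational hv (n + 1))

theorem tendsto_of_dens_atTop_of_irrational {v : ℝ} (hv : Irrational v) :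
    Tendsto (GenContFract.of v).dens atTop atTop :=
  tendsto_atTop_mono (natCast_le_of_den_of_irrational hv) tendsto_natCast_atTop_atTop

theorem exists_rat_eq_convs_and_den_eq_of_irrational {v : ℝ} (hv : Irrational v) (n : ℕ) :
    ∃ x : ℚ, (GenContFract.of v).convs n = x ∧ (x.den : ℝ) = (GenContFract.of v).dens n := by
  obtain ⟨A, B, hA, hB⟩ := exists_int_eq_num_and_den v n
  obtain ⟨A', B', hA', hB'⟩ := exists_int_eq_num_and_den v (n + 1)
  have hdet : A * B' - B * A' = (-1) ^ (n + 1) := by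
    have : (GenContFract.of v).nums n * (GenContFract.of v).dens (n + 1) -
        (GenContFract.of v).dens n * (GenContFract.of v).nums (n + 1) = (-1) ^ (n + 1) :=
      SimpContFract.determinant (s := SimpContFract.of v) (not_terminatedAt_of_irrational hv n)
    rw [hA, hB, hA', hB'] at this
    exact_mod_cast this
  have hsign : ((-1 : ℤ) ^ (n + 1)) * (-1) ^ (n + 1) = 1 := by
    rw [← mul_pow]; norm_num
  -- the determinant formula makes `A` and `B` coprime, so `B` is the reduced denominator
  have hcop : IsCoprime A B :=
    ⟨(-1) ^ (n + 1) * B', -((-1) ^ (n + 1) * A'),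
      by linear_combination (-1) ^ (n + 1) * hdet + hsign⟩
  have hB0 : 0 < B := by exact_mod_cast hB ▸ one_le_of_den_of_irrational hv n
  refine ⟨A / B, by rw [conv_eq_num_div_den, hA, hB]; push_cast; rfl, ?_⟩
  rw [hB]
  exact_mod_cast Rat.den_div_eq_of_coprime hB0 (Int.isCoprime_iff_gcd_eq_one.mp hcop)

end GenContFract

def approxSet (s ν : ℝ) : Set (ℤ × ℕ+) :=
  {pq | |s - (pq.1 : ℝ) / ((pq.2 : ℕ) : ℝ)| < ((pq.2 : ℕ) : ℝ) ^ (-ν)}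

theorem approxExp_eq_iSup_approxSet (s : ℝ) :
    approxExp s = ⨆ (ν : ℝ) (_ : (approxSet s ν).Infinite), ENNReal.ofReal ν :=
  rfl

theorem finite_setOf_abs_sub_lt_one_of_den_le (s : ℝ) (M : ℕ) :
    {pq : ℤ × ℕ+ | |s - (pq.1 : ℝ) / ((pq.2 : ℕ) : ℝ)| < 1 ∧ (pq.2 : ℕ) ≤ M}.Finite := by
  set K : ℤ := ⌈(|s| + 1) * M⌉
  refine ((Set.finite_Icc (-K) K).prod
    ((Set.finite_Iic M).preimage PNat.coe_injective.injOn)).subset ?_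
  rintro ⟨p, q⟩ ⟨hpq, hqM⟩
  have hq : (0 : ℝ) < (q : ℕ) := by positivity
  have hp : |(p : ℝ)| ≤ K := by
    have hpq' : |(p : ℝ) / (q : ℕ)| < |s| + 1 := by
      linarith [abs_sub_abs_le_abs_sub ((p : ℝ) / (q : ℕ)) s, abs_sub_comm ((p : ℝ) / (q : ℕ)) s]
    rw [abs_div, abs_of_pos hq, div_lt_iff₀ hq] at hpq'
    calc |(p : ℝ)| ≤ (|s| + 1) * M := hpq'.le.trans (by gcongr)
      _ ≤ K := Int.le_ceil _
  exact ⟨abs_le.mp (by exact_mod_cast hp), hqM⟩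

theorem exists_mem_approxSet_den_gt {s ν : ℝ} (hν : 0 ≤ ν) (h : (approxSet s ν).Infinite)
    (M : ℕ) : ∃ pq ∈ approxSet s ν, M < (pq.2 : ℕ) := by
  by_contra! hM
  refine h ((finite_setOf_abs_sub_lt_one_of_den_le s M).subset fun pq hpq ↦ ⟨?_, hM pq hpq⟩)
  exact hpq.trans_le
    (rpow_le_one_of_one_le_of_nonpos (by exact_mod_cast pq.2.pos) (by linarith))

theorem exists_convs_eq_and_den_le {s : ℝ} (hs : Irrational s) {p : ℤ} {q : ℕ} (hq : 0 < q)
    (h : |s - p / q| < 1 / (2 * q ^ 2)) :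
    ∃ n, (GenContFract.of s).convs n = p / q ∧ (GenContFract.of s).dens n ≤ q := by
  set x : ℚ := p / q
  have hx : (x : ℝ) = p / q := by push_cast [x]; rfl
  have hxden : x.den ≤ q := by
    refine Nat.le_of_dvd hq (Int.natCast_dvd_natCast.mp ?_)
    have := Rat.den_dvd p q
    rwa [Rat.divInt_eq_div] at this
  obtain ⟨n, hn⟩ := Real.exists_convs_eq_rat (ξ := s) (q := x) <| by
    rw [hx]
    refine h.trans_le ?_
    gcongr
  obtain ⟨y, hy, hyden⟩ := GenContFract.exists_rat_eq_convs_and_den_eq_of_irrational hs n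
  have hyx : y = x := by exact_mod_cast hy ▸ hn
  refine ⟨n, hn.trans hx, ?_⟩
  rw [← hyden, hyx]
  exact_mod_cast hxden

theorem frequently_rpow_lt_of_infinite_approxSet {s ν : ℝ} (hs : Irrational s) (hν : 2 < ν)
    (h : (approxSet s ν).Infinite) :
    ∃ᶠ n in atTop, (GenContFract.of s).dens n ^ ν < (GenContFract.of s).dens n *
      ((GenContFract.of s).dens n + (GenContFract.of s).dens (n + 1)) := by
  set q := (GenContFract.of s).dens
  have hmono : Monotone q := monotone_nat_of_le_succ fun _ ↦ GenContFract.of_den_mono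
  refine frequently_atTop.2 fun N ↦ ?_
  obtain ⟨⟨a, b⟩, hab, hbM⟩ :=
    exists_mem_approxSet_den_gt (by linarith) h (max ⌈q N⌉₊ ⌈(2 : ℝ) ^ (ν - 2)⁻¹⌉₊)
  rw [max_lt_iff] at hbM
  have hbN : q N < (b : ℕ) := (Nat.le_ceil _).trans_lt (by exact_mod_cast hbM.1)
  have hsmall : ((b : ℕ) : ℝ) ^ (-ν) ≤ 1 / (2 * ((b : ℕ) : ℝ) ^ 2) :=
    rpow_neg_le_one_div_two_mul_sq hν ((Nat.le_ceil _).trans (by exact_mod_cast hbM.2.le))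
  obtain ⟨n, hn, hqn⟩ := exists_convs_eq_and_den_le hs b.pos (lt_of_lt_of_le hab hsmall)
  have hlow := GenContFract.lt_abs_sub_convs (GenContFract.not_terminatedAt_of_irrational hs n)
  rw [hn] at hlow
  have hq₀ : 0 < q n := lt_of_lt_of_le one_pos (GenContFract.one_le_of_den_of_irrational hs n)
  have hq₁ : 0 < q (n + 1) := hq₀.trans_le GenContFract.of_den_mono
  refine ⟨n, ?_, ?_⟩
  · -- `2 b² < qₙ (qₙ + qₙ₊₁)` forces `b < qₙ₊₁`, while `q_N < b`
    by_contra! hnN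
    have hsq : 2 * ((b : ℕ) : ℝ) ^ 2 < q n * (q n + q (n + 1)) :=
      (one_div_lt_one_div (by positivity) (by positivity)).mp (hlow.trans (hab.trans_le hsmall))
    have : q n ≤ q (n + 1) := hmono n.le_succ
    have : q (n + 1) ≤ q N := hmono hnN
    nlinarith
  · have hden : ((b : ℕ) : ℝ) ^ (-ν) ≤ q n ^ (-ν) := rpow_le_rpow_of_nonpos hq₀ hqn (by linarith)
    rw [rpow_neg hq₀.le, ← one_div] at hden
    exact (one_div_lt_one_div (by positivity) (by positivity)).mp (hlow.trans (hab.trans_le hden))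

theorem infinite_approxSet_of_frequently {s ν : ℝ} (hs : Irrational s)
    (h : ∃ᶠ n in atTop, ν - 1 <
      log ((GenContFract.of s).dens (n + 1)) / log ((GenContFract.of s).dens n)) :
    (approxSet s ν).Infinite := by
  set q := (GenContFract.of s).dens
  refine Set.Infinite.of_image Prod.snd (Set.infinite_of_forall_exists_gt fun M ↦ ?_)
  obtain ⟨n, hn, hM⟩ := (h.and_eventually
    ((GenContFract.tendsto_of_dens_atTop_of_irrational hs).eventually_gt_atTop (max 1 M))).exists
  rw [max_lt_iff] at hM
  obtain ⟨x, hx, hxden⟩ := GenContFract.exists_rat_eq_convs_and_den_eq_of_irrational hs n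
  have hq₀ : 0 < q n := one_pos.trans hM.1
  have hq₁ : 0 < q (n + 1) := hq₀.trans_le GenContFract.of_den_mono
  refine ⟨⟨x.den, x.pos⟩, ⟨(x.num, ⟨x.den, x.pos⟩), ?_, rfl⟩, ?_⟩
  · change |s - (x.num : ℝ) / (x.den : ℝ)| < (x.den : ℝ) ^ (-ν)
    rw [← Rat.cast_def, ← hx, hxden, rpow_neg hq₀.le, ← one_div]
    calc |s - (GenContFract.of s).convs n| ≤ 1 / (q n * q (n + 1)) :=
          GenContFract.abs_sub_convs_le (GenContFract.not_terminatedAt_of_irrational hs n)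
      _ < 1 / q n ^ ν := one_div_lt_one_div_of_lt (by positivity)
          ((rpow_lt_mul_iff_sub_one_lt_log_div_log hM.1 hq₁).mpr hn)
  · change (M : ℕ) < x.den
    exact_mod_cast hM.2.trans_eq hxden.symm

theorem one_add_limsup_le_approxExp {s : ℝ} (hs : Irrational s) :
    1 + limsup (fun n ↦ ENNReal.ofReal
      (log ((GenContFract.of s).dens (n + 1)) / log ((GenContFract.of s).dens n))) atTop ≤
      approxExp s := by
  refine le_of_forall_lt fun c hc ↦ ?_
  obtain ⟨ν, -, hcν, hν⟩ := ENNReal.lt_iff_exists_real_btwn.mp hc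
  have hr : ∀ n, 0 ≤ log ((GenContFract.of s).dens (n + 1)) / log ((GenContFract.of s).dens n) :=
    fun n ↦ div_nonneg (log_nonneg (GenContFract.one_le_of_den_of_irrational hs _))
      (log_nonneg (GenContFract.one_le_of_den_of_irrational hs _))
  rw [approxExp_eq_iSup_approxSet]
  exact hcν.trans_le (le_iSup₂ (f := fun ν (_ : (approxSet s ν).Infinite) ↦ ENNReal.ofReal ν) ν
    (infinite_approxSet_of_frequently hs
      (ENNReal.frequently_sub_one_lt_of_ofReal_lt_one_add_limsup hr hν)))

theorem approxExp_le_one_add_limsup {s : ℝ} (hs : Irrational s) :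
    approxExp s ≤ 1 + limsup (fun n ↦ ENNReal.ofReal
      (log ((GenContFract.of s).dens (n + 1)) / log ((GenContFract.of s).dens n))) atTop := by
  set q := (GenContFract.of s).dens
  have hq := GenContFract.tendsto_of_dens_atTop_of_irrational hs
  rw [approxExp_eq_iSup_approxSet]
  refine iSup₂_le fun ν hν ↦ ENNReal.ofReal_le_one_add_limsup_of_frequently fun δ hδ ↦ ?_
  rcases le_or_gt ν 2 with hν2 | hν2
  · refine Eventually.frequently ((hq.eventually_gt_atTop 1).mono fun n hn ↦ ?_)
    have : 1 ≤ log (q (n + 1)) / log (q n) :=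
      (one_le_div (log_pos hn)).mpr (log_le_log (by linarith) GenContFract.of_den_mono)
    linarith
  · have hlog2 : ∀ᶠ n in atTop, Real.log 2 / log (q n) < δ :=
      (tendsto_const_nhds.div_atTop (tendsto_log_atTop.comp hq)).eventually (gt_mem_nhds hδ)
    refine ((frequently_rpow_lt_of_infinite_approxSet hs hν2 hν).and_eventually
      ((hq.eventually_gt_atTop 1).and hlog2)).mono ?_
    rintro n ⟨hlt, hn1, hn2⟩
    have hmono : q n ≤ q (n + 1) := GenContFract.of_den_mono
    have hq₁ : 0 < q (n + 1) := (one_pos.trans hn1).trans_le hmono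
    have hle : q n + q (n + 1) ≤ 2 * q (n + 1) := by linarith
    have := (rpow_lt_mul_iff_sub_one_lt_log_div_log hn1 (by positivity)).mp
      (hlt.trans_le (mul_le_mul_of_nonneg_left hle (by positivity)))
    rw [log_mul two_ne_zero (by positivity), add_div] at this
    linarith

/-- For irrational `s` with continued fraction convergent denominators `q_n` and
`r_n = log q_{n+1} / log q_n`, one has `μ(s) = 1 + limsup r_n`. -/
theorem approxExp_eq_one_add_limsup (s : ℝ) (hs : Irrational s) :
    approxExp s = 1 + Filter.limsup
      (fun n : ℕ => ENNReal.ofReal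
        (Real.log ((GenContFract.of s).dens (n + 1)) / Real.log ((GenContFract.of s).dens n)))
      atTop :=
  le_antisymm (approxExp_le_one_add_limsup hs) (one_add_limsup_le_approxExp hs)
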